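/- A sequence s = (x_n) in a V-category (X,a) is Cauchy if and only if the associated modules φ_s(x) = ⋁_{N} ⋀_{n ≥ N} a(x_n, x) (of type 1 ⇸ X) and ψ_s(x) = ⋁_{N} ⋀_{n ≥ N} a(x, x_n) (of type X ⇸ 1) form an adjunction φ_s ⊣ ψ_s, i.e. k ≤ ⋁_{x} φ_s(x) ⊗ ψ_s(x) and ψ_s(x) ⊗ φ_s(y) ≤ a(x,y) for all x, y. -/

import Mathlib

/-- A (commutative, unital) quantale structure on a complete lattice `V`:
an associative commutative multiplication `⊗` with unit `k` such that
`u ⊗ -` preserves arbitrary suprema. -/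
structure QuantaleStr (V : Type*) [CompleteLattice V] where
  mul : V → V → V
  k : V
  mul_comm : ∀ a b, mul a b = mul b a
  mul_assoc : ∀ a b c, mul (mul a b) c = mul a (mul b c)
  mul_unit : ∀ a, mul a k = a
  mul_sSup : ∀ (a : V) (S : Set V), mul a (sSup S) = ⨆ b ∈ S, mul a b

variable {V : Type*} [CompleteLattice V]

/-- `a : X → X → V` is a `V`-category structure: `k ≤ a x x` and
`a x y ⊗ a y z ≤ a x z`. -/
def IsVCat (Q : QuantaleStr V) {X : Type*} (a : X → X → V) : Prop :=
  (∀ x, Q.k ≤ a x x) ∧ ∀ x y z, Q.mul (a x y) (a y z) ≤ a x z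


/-- The "Cauchyness" of a sequence `s` in a `V`-category `(X,a)`:
`C s = ⨆ N, ⨅_{n,m ≥ N} a (s n) (s m)`. -/
def cauchyDeg (Q : QuantaleStr V) {X : Type*} (a : X → X → V) (s : ℕ → X) : V :=
  ⨆ N : ℕ, ⨅ n : ℕ, ⨅ m : ℕ, ⨅ _ : N ≤ n, ⨅ _ : N ≤ m, a (s n) (s m)

/-- `s` is a Cauchy sequence if `k ≤ C s`. -/
def IsCauchySeq (Q : QuantaleStr V) {X : Type*} (a : X → X → V) (s : ℕ → X) : Prop :=
  Q.k ≤ cauchyDeg Q a s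


/-- The module `φ_s : 1 ⇸ X` associated to a sequence `s`:
`φ_s x = ⨆ N, ⨅_{n ≥ N} a (s n) x`. -/
def phiSeq (Q : QuantaleStr V) {X : Type*} (a : X → X → V) (s : ℕ → X) (x : X) : V :=
  ⨆ N : ℕ, ⨅ n : ℕ, ⨅ _ : N ≤ n, a (s n) x

/-- The module `ψ_s : X ⇸ 1` associated to a sequence `s`:
`ψ_s x = ⨆ N, ⨅_{n ≥ N} a x (s n)`. -/
def psiSeq (Q : QuantaleStr V) {X : Type*} (a : X → X → V) (s : ℕ → X) (x : X) : V :=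
  ⨆ N : ℕ, ⨅ n : ℕ, ⨅ _ : N ≤ n, a x (s n)

/-!
Transitivity gives `ψ_s x ⊗ φ_s y ≤ a x y` and `φ_s x ⊗ ψ_s x ≤ C s` by passing through a
common late term `x_n` of the sequence. Conversely, the `N`-th tail infimum of `C s` is below
both `φ_s (x_L)` and `ψ_s (x_L)` for any `L ≥ N`, so `C s ⊗ C s ≤ ⨆ x, φ_s x ⊗ ψ_s x`; with
`k = k ⊗ k` this turns `k ≤ C s` into `k ≤ ⨆ x, φ_s x ⊗ ψ_s x`.
-/

namespace QuantaleStr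

variable (Q : QuantaleStr V)

lemma mul_iSup (a : V) {ι : Sort*} (f : ι → V) :
    Q.mul a (⨆ i, f i) = ⨆ i, Q.mul a (f i) := by
  rw [iSup, Q.mul_sSup, iSup_range]

lemma mul_sup (a b c : V) : Q.mul a (b ⊔ c) = Q.mul a b ⊔ Q.mul a c := by
  simp only [sup_eq_iSup, Q.mul_iSup]
  exact iSup_congr fun i => by cases i <;> rfl

lemma mul_monotone (a : V) : Monotone (Q.mul a) := fun b c hbc => by
  rw [← sup_eq_right.2 hbc, Q.mul_sup]
  exact le_sup_left

lemma mul_le_mul {a b c d : V} (hac : a ≤ c) (hbd : b ≤ d) : Q.mul a b ≤ Q.mul c d :=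
  calc Q.mul a b ≤ Q.mul a d := Q.mul_monotone a hbd
    _ = Q.mul d a := Q.mul_comm _ _
    _ ≤ Q.mul d c := Q.mul_monotone d hac
    _ = Q.mul c d := Q.mul_comm _ _

lemma iSup_mul_iSup_le {ι κ : Sort*} {f : ι → V} {g : κ → V} {z : V}
    (h : ∀ i j, Q.mul (f i) (g j) ≤ z) : Q.mul (⨆ i, f i) (⨆ j, g j) ≤ z := by
  rw [Q.mul_iSup]
  refine iSup_le fun j => ?_
  rw [Q.mul_comm, Q.mul_iSup]
  exact iSup_le fun i => (Q.mul_comm _ _).trans_le (h i j)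

end QuantaleStr

section Sequence

variable (Q : QuantaleStr V) {X : Type*} (a : X → X → V) (s : ℕ → X)

lemma psiSeq_mul_phiSeq_le (htrans : ∀ x y z, Q.mul (a x y) (a y z) ≤ a x z) (x y : X) :
    Q.mul (psiSeq Q a s x) (phiSeq Q a s y) ≤ a x y :=
  Q.iSup_mul_iSup_le fun N M =>
    (Q.mul_le_mul (iInf₂_le (max N M) (le_max_left N M))
      (iInf₂_le (max N M) (le_max_right N M))).trans (htrans x _ y)

lemma iSup_phiSeq_mul_psiSeq_le_cauchyDeg (htrans : ∀ x y z, Q.mul (a x y) (a y z) ≤ a x z) :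
    ⨆ x, Q.mul (phiSeq Q a s x) (psiSeq Q a s x) ≤ cauchyDeg Q a s :=
  iSup_le fun x => Q.iSup_mul_iSup_le fun N M => le_iSup_of_le (max N M) <|
    le_iInf₂ fun n m => le_iInf₂ fun hn hm =>
      (Q.mul_le_mul (iInf₂_le n ((le_max_left N M).trans hn))
        (iInf₂_le m ((le_max_right N M).trans hm))).trans (htrans _ x _)

lemma cauchyDeg_mul_self_le :
    Q.mul (cauchyDeg Q a s) (cauchyDeg Q a s) ≤ ⨆ x, Q.mul (phiSeq Q a s x) (psiSeq Q a s x) :=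
  Q.iSup_mul_iSup_le fun N M => le_iSup_of_le (s (max N M)) <| Q.mul_le_mul
    (le_iSup_of_le N <| le_iInf₂ fun n hn =>
      (iInf₂_le n (max N M)).trans (iInf₂_le hn (le_max_left N M)))
    (le_iSup_of_le M <| le_iInf₂ fun m hm =>
      (iInf₂_le (max N M) m).trans (iInf₂_le (le_max_right N M) hm))

end Sequence

/-- A sequence `s` is Cauchy iff its associated modules form an adjunction
`φ_s ⊣ ψ_s`, i.e. `k ≤ ⨆ x, φ_s x ⊗ ψ_s x` and `ψ_s x ⊗ φ_s y ≤ a x y`. -/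
theorem cauchy_iff_adjoint (Q : QuantaleStr V) {X : Type*}
    (a : X → X → V) (ha : IsVCat Q a) (s : ℕ → X) :
    IsCauchySeq Q a s ↔
      (Q.k ≤ ⨆ x : X, Q.mul (phiSeq Q a s x) (psiSeq Q a s x)) ∧
      (∀ x y : X, Q.mul (psiSeq Q a s x) (phiSeq Q a s y) ≤ a x y) := by
  constructor
  · intro hC
    refine ⟨?_, psiSeq_mul_phiSeq_le Q a s ha.2⟩
    calc Q.k = Q.mul Q.k Q.k := (Q.mul_unit _).symm
      _ ≤ Q.mul (cauchyDeg Q a s) (cauchyDeg Q a s) := Q.mul_le_mul hC hC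
      _ ≤ _ := cauchyDeg_mul_self_le Q a s
  · rintro ⟨hk, -⟩
    exact hk.trans (iSup_phiSeq_mul_psiSeq_le_cauchyDeg Q a s ha.2)
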